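/- Let C > 0 and c₀ ∈ ℝ, and let I = {t ∈ ℝ : t > c₀/(4·√(2C))}. Define f, h : I → ℝ by f(t) = √(C/2) (constant) and h(t) = √(4·√(2C)·t − c₀). Then h is differentiable on I with derivative h'(t) = 2·√(2C)/√(4·√(2C)·t − c₀), and the pair (f, h) satisfies both equations on I: (★) h'(t)·h(t)·f(t) − 2·f(t)² = C and (★★) −2·h(t)²·f(t)²·f'(t) + f(t)³·h(t)·h'(t) − 4·f(t)⁴ + 2·f(t)²·h(t)² = C·h(t)² (here f' ≡ 0). -/

import Mathlib

/-!
With `a = √(2C)` one has `a · f = C` and `f² = C/2`, while `h² = 4at − c₀` is affine, so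
`h' · h = 2a` is constant. Both equations then become polynomial identities in `f` and `h`.
-/

open Real

theorem hasDerivAt_sqrt_mul_sub {k c t : ℝ} (hpos : 0 < k * t - c) :
    HasDerivAt (fun t => √(k * t - c)) (k / 2 / √(k * t - c)) t := by
  have hlin : HasDerivAt (fun t => k * t - c) k t := by
    simpa using ((hasDerivAt_id t).const_mul k).sub_const c
  exact (hlin.sqrt hpos.ne').congr_deriv (by ring)

theorem sqrt_two_mul_mul_sqrt_half {C : ℝ} (hC : 0 ≤ C) : √(2 * C) * √(C / 2) = C := by
  rw [← sqrt_mul (by positivity), show 2 * C * (C / 2) = C ^ 2 by ring, sqrt_sq hC]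

/-- For `C > 0`, the pair `f(t) = √(C/2)`, `h(t) = √(4√(2C)·t − c₀)` is a
solution of the system (★), (★★) (with `f' ≡ 0`) on `{t : t > c₀/(4√(2C))}`,
with `h'(t) = 2√(2C)/√(4√(2C)·t − c₀)`. -/
theorem stmt_2 (C c₀ : ℝ) (hC : 0 < C) (f h : ℝ → ℝ)
    (hf : ∀ t, f t = Real.sqrt (C / 2))
    (hh : ∀ t, h t = Real.sqrt (4 * Real.sqrt (2 * C) * t - c₀)) :
    ∀ t : ℝ, c₀ / (4 * Real.sqrt (2 * C)) < t →
      HasDerivAt h (2 * Real.sqrt (2 * C) / Real.sqrt (4 * Real.sqrt (2 * C) * t - c₀)) t ∧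
      (2 * Real.sqrt (2 * C) / Real.sqrt (4 * Real.sqrt (2 * C) * t - c₀)) * h t * f t
          - 2 * (f t) ^ 2 = C ∧
      -2 * (h t) ^ 2 * (f t) ^ 2 * 0
          + (f t) ^ 3 * h t
            * (2 * Real.sqrt (2 * C) / Real.sqrt (4 * Real.sqrt (2 * C) * t - c₀))
          - 4 * (f t) ^ 4 + 2 * (f t) ^ 2 * (h t) ^ 2 = C * (h t) ^ 2 := by
  intro t ht
  set a := √(2 * C)
  have ha : 0 < 4 * a := by positivity
  have hs : 0 < 4 * a * t - c₀ := sub_pos.2 ((div_lt_iff₀' ha).1 ht)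
  have haf : a * f t = C := by rw [hf]; exact sqrt_two_mul_mul_sqrt_half hC.le
  have hf2 : f t ^ 2 = C / 2 := by rw [hf]; exact sq_sqrt (by positivity)
  have hh' : 2 * a / √(4 * a * t - c₀) * h t = 2 * a := by
    rw [hh]; exact div_mul_cancel₀ _ (sqrt_pos.2 hs).ne'
  refine ⟨?_, ?_, ?_⟩
  · rw [funext hh]
    exact (hasDerivAt_sqrt_mul_sub hs).congr_deriv (by ring)
  · linear_combination f t * hh' + 2 * haf - 2 * hf2
  · linear_combination
      f t ^ 3 * hh' + 2 * f t ^ 2 * haf + (2 * h t ^ 2 - 4 * f t ^ 2) * hf2
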